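/- arXiv:2107.13134 — 3 statements merged into one kernel-verified Lean document; each statement's English description precedes it below -/
import Mathlib

section
/- Let a, b : [0,T] → ℝ be positive differentiable functions with a(0) ≤ b(0), satisfying a' = −ε a b − ε R and b' = −ε a b − ε R for a common function R, on [0,T]. Suppose moreover that for all t ∈ [0,T]: b(t) ≥ a(t) > (3/4)a(0), |R(t)| ≤ (3/8)a(0) b(t) + ((1/4)a(0) + (1/16)b(0)) a(t), and b(0) − b(t) ≤ (1/4)a(0). If additionally a(0) ≥ 1/B for some B ≥ 1, then a'(t) ≤ −(ε/(16 B)) a(t) for all t ∈ [0,T], and consequently a(T) ≤ a(0) exp(−ε T/(16 B)). -/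
/-!
Since `a ≥ 3a(0)/4`, the term `(3/8) a(0) b` of the bound on `|R|` is absorbed by half of `a b`;
since `b(0) ≤ b + a(0)/4` and `b ≥ a ≥ 3a(0)/4`, the other half dominates the remaining terms up
to `a(0) a / 16 ≥ a / (16 B)`. Hence `a' ≤ -(ε / (16 B)) a`, and Grönwall's inequality gives the
exponential decay.
-/

open Real Set

theorem le_mul_exp_of_hasDerivAt_le_mul {f f' : ℝ → ℝ} {K a b : ℝ}
    (hf : ∀ t ∈ Icc a b, HasDerivAt f (f' t) t) (bound : ∀ t ∈ Icc a b, f' t ≤ K * f t) :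
    ∀ t ∈ Icc a b, f t ≤ f a * exp (K * (t - a)) := by
  intro t ht
  rw [← gronwallBound_ε0]
  exact le_gronwallBound_of_liminf_deriv_right_le (f' := f')
    (fun s hs ↦ (hf s hs).continuousAt.continuousWithinAt)
    (fun s hs _ hr ↦ (hf s (Ico_subset_Icc_self hs)).hasDerivWithinAt.liminf_right_slope_le hr)
    le_rfl (fun s hs ↦ by simpa using bound s (Ico_subset_Icc_self hs)) t ht

theorem div_mul_le_mul_add_of_abs_le {a₀ b₀ a b R : ℝ} (ha : 0 ≤ a)
    (hlow : 3 / 4 * a₀ ≤ a) (hab : a ≤ b) (hdrop : b₀ - b ≤ 1 / 4 * a₀)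
    (hR : |R| ≤ 3 / 8 * a₀ * b + (1 / 4 * a₀ + 1 / 16 * b₀) * a) :
    a₀ / 16 * a ≤ a * b + R := by
  have hb : a / 2 * b ≤ (a - 3 / 8 * a₀) * b :=
    mul_le_mul_of_nonneg_right (by linarith) (ha.trans hab)
  have hcoef : a₀ / 16 ≤ b / 2 - a₀ / 4 - b₀ / 16 := by linarith
  have ha' : a₀ / 16 * a ≤ (b / 2 - a₀ / 4 - b₀ / 16) * a := mul_le_mul_of_nonneg_right hcoef ha
  linarith [neg_abs_le R]

theorem stmt_7_general (a b R : ℝ → ℝ) (ε B T : ℝ)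
    (hε : 0 < ε) (hT : 0 ≤ T)
    (ha : ∀ t ∈ Set.Icc (0 : ℝ) T, HasDerivAt a (-ε * a t * b t - ε * R t) t)
    (hpos : ∀ t ∈ Set.Icc (0 : ℝ) T, 0 < a t ∧ a t ≤ b t)
    (hlow : ∀ t ∈ Set.Icc (0 : ℝ) T, (3 / 4) * a 0 < a t)
    (hR : ∀ t ∈ Set.Icc (0 : ℝ) T,
      |R t| ≤ (3 / 8) * a 0 * b t + ((1 / 4) * a 0 + (1 / 16) * b 0) * a t)
    (hbdrop : ∀ t ∈ Set.Icc (0 : ℝ) T, b 0 - b t ≤ (1 / 4) * a 0)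
    (hB' : 1 / B ≤ a 0) :
    (∀ t ∈ Set.Icc (0 : ℝ) T,
      -ε * a t * b t - ε * R t ≤ -(ε / (16 * B)) * a t) ∧
      a T ≤ a 0 * Real.exp (-(ε * T) / (16 * B)) := by
  have hdecay : ∀ t ∈ Icc 0 T, -ε * a t * b t - ε * R t ≤ -(ε / (16 * B)) * a t := by
    intro t ht
    obtain ⟨hat, hatb⟩ := hpos t ht
    have hcorr := div_mul_le_mul_add_of_abs_le hat.le (hlow t ht).le hatb (hbdrop t ht) (hR t ht)
    have hrate : 1 / B / 16 * a t ≤ a 0 / 16 * a t := by gcongr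
    calc -ε * a t * b t - ε * R t = -(ε * (a t * b t + R t)) := by ring
      _ ≤ -(ε * (1 / B / 16 * a t)) := by gcongr; linarith
      _ = -(ε / (16 * B)) * a t := by ring
  refine ⟨hdecay, ?_⟩
  convert le_mul_exp_of_hasDerivAt_le_mul ha hdecay T (right_mem_Icc.mpr hT) using 3
  ring

/-- Differential inequality analysis of Step 3, Case b) in the proof of Theorem 1:
under the stated bounds on the averages `a = n̄₁`, `b = n̄₂` and the fluctuation
correlation `R`, the average `a` decays exponentially with rate `ε/(16B)`. -/
theorem stmt_7 (a b R : ℝ → ℝ) (ε B T : ℝ)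
    (hε : 0 < ε) (hB : 1 ≤ B) (hT : 0 ≤ T)
    (hab0 : a 0 ≤ b 0)
    (ha : ∀ t ∈ Set.Icc (0 : ℝ) T, HasDerivAt a (-ε * a t * b t - ε * R t) t)
    (hb : ∀ t ∈ Set.Icc (0 : ℝ) T, HasDerivAt b (-ε * a t * b t - ε * R t) t)
    (hpos : ∀ t ∈ Set.Icc (0 : ℝ) T, 0 < a t ∧ a t ≤ b t)
    (hlow : ∀ t ∈ Set.Icc (0 : ℝ) T, (3 / 4) * a 0 < a t)
    (hR : ∀ t ∈ Set.Icc (0 : ℝ) T,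
      |R t| ≤ (3 / 8) * a 0 * b t + ((1 / 4) * a 0 + (1 / 16) * b 0) * a t)
    (hbdrop : ∀ t ∈ Set.Icc (0 : ℝ) T, b 0 - b t ≤ (1 / 4) * a 0)
    (hB' : 1 / B ≤ a 0) :
    (∀ t ∈ Set.Icc (0 : ℝ) T,
      -ε * a t * b t - ε * R t ≤ -(ε / (16 * B)) * a t) ∧
      a T ≤ a 0 * Real.exp (-(ε * T) / (16 * B)) :=
  stmt_7_general a b R ε B T hε hT ha hpos hlow hR hbdrop hB'
end

section
/- Let q : 𝕋 → ℝ be a C² function on the circle 𝕋 = [−1/2,1/2] (endpoints identified) with finitely many zeros y₁ < ⋯ < y_N, all in the open interval, each being a sign change (q changes sign at each y_i), and q(±1/2) ≠ 0. Then ∫_𝕋 (q/|q|)(y) q''(y) dy = −2 Σ_{i=1}^{N} |q'(y_i)|, where the integrand is defined away from the zeros. -/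
/-!
On an interval between consecutive zeros of `q` the sign of `q` is a constant `σ = ±1`, so the
integral of `sign q * q''` over it is `σ` times the increment of `q'`. Summing by parts leaves the
jump of `sign q * q'` at every zero `y`, which is `-2 |q'(y)|`: as `q y = 0`, the one-sided
difference quotients give `σ q'(y) ≥ 0` for the sign `σ` of `q` just right of `y`, and
`σ q'(y) ≤ 0` for its sign just left of `y`. The two boundary terms at `±1/2` cancel by
periodicity.
-/

open MeasureTheory Set Filter

lemma div_abs_eq_sign (x : ℝ) : x / |x| = SignType.sign x := by
  rcases lt_trichotomy x 0 with h | rfl | h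
  · simp [abs_of_neg h, sign_neg h, h.ne]
  · simp
  · simp [abs_of_pos h, sign_pos h, h.ne']

lemma measurable_coe_sign : Measurable fun x : ℝ ↦ (SignType.sign x : ℝ) := by
  simp_rw [← div_abs_eq_sign]
  fun_prop

lemma abs_coe_signType_le (s : SignType) : |(s : ℝ)| ≤ 1 := by
  rcases s with _ | _ | _ <;> simp

lemma abs_coe_signType {s : SignType} (hs : s ≠ 0) : |(s : ℝ)| = 1 := by
  rcases s with _ | _ | _ <;> simp_all

lemma IsPreconnected.sign_eq_sign {X : Type*} [TopologicalSpace X] {S : Set X} {f : X → ℝ}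
    (hS : IsPreconnected S) (hf : ContinuousOn f S) (hf0 : ∀ x ∈ S, f x ≠ 0) {x y : X}
    (hx : x ∈ S) (hy : y ∈ S) : SignType.sign (f x) = SignType.sign (f y) := by
  have no_change : ∀ {u v}, u ∈ S → v ∈ S → f u < 0 → ¬ 0 < f v := fun hu hv hu0 hv0 ↦ by
    obtain ⟨w, hw, hw0⟩ := hS.intermediate_value hu hv hf ⟨hu0.le, hv0.le⟩
    exact hf0 w hw hw0
  rcases (hf0 x hx).lt_or_gt with hx0 | hx0 <;> rcases (hf0 y hy).lt_or_gt with hy0 | hy0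
  · rw [sign_neg hx0, sign_neg hy0]
  · exact absurd hy0 (no_change hx hy hx0)
  · exact absurd hx0 (no_change hy hx hy0)
  · rw [sign_pos hx0, sign_pos hy0]

lemma Function.Periodic.deriv {𝕜 F : Type*} [NontriviallyNormedField 𝕜] [NormedAddCommGroup F]
    [NormedSpace 𝕜 F] {f : 𝕜 → F} {c : 𝕜} (h : Function.Periodic f c) :
    Function.Periodic (deriv f) c := fun x ↦ by
  rw [← deriv_comp_add_const, show (fun x ↦ f (x + c)) = f from funext h]

lemma MonotoneOn.apply_notMem_Ioo_apply_succ {α : Type*} [Preorder α] {f : ℕ → α} {m j k : ℕ}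
    (hf : MonotoneOn f (Iic m)) (hj : j ≤ m) (hk : k + 1 ≤ m) : f j ∉ Ioo (f k) (f (k + 1)) := by
  rintro ⟨hkj, hjk⟩
  rcases le_or_gt j k with h | h
  · exact (hf hj (show k ≤ m by omega) h).not_gt hkj
  · exact (hf hk hj h).not_gt hjk

section OneSided

variable {f : ℝ → ℝ} {f' a b x : ℝ}

lemma HasDerivAt.nonneg_of_eq_zero_of_nonneg_right (hf : HasDerivAt f f' x) (hx : f x = 0)
    (hxb : x < b) (hnonneg : ∀ y ∈ Ioo x b, 0 ≤ f y) : 0 ≤ f' := by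
  refine ge_of_tendsto ((hasDerivAt_iff_tendsto_slope.mp hf).mono_left (nhdsGT_le_nhdsNE x)) ?_
  filter_upwards [Ioo_mem_nhdsGT hxb] with y hy
  rw [slope_def_field, hx, sub_zero]
  exact div_nonneg (hnonneg y hy) (sub_pos.mpr hy.1).le

lemma HasDerivAt.nonpos_of_eq_zero_of_nonneg_left (hf : HasDerivAt f f' x) (hx : f x = 0)
    (hax : a < x) (hnonneg : ∀ y ∈ Ioo a x, 0 ≤ f y) : f' ≤ 0 := by
  refine le_of_tendsto ((hasDerivAt_iff_tendsto_slope.mp hf).mono_left (nhdsLT_le_nhdsNE x)) ?_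
  filter_upwards [Ioo_mem_nhdsLT hax] with y hy
  rw [slope_def_field, hx, sub_zero]
  exact div_nonpos_of_nonneg_of_nonpos (hnonneg y hy) (sub_neg.mpr hy.2).le

variable {s : SignType}

lemma HasDerivAt.sign_mul_eq_abs_of_sign_eq_right (hf : HasDerivAt f f' x) (hx : f x = 0)
    (hxb : x < b) (hs : ∀ y ∈ Ioo x b, SignType.sign (f y) = s) (hs0 : s ≠ 0) :
    s * f' = |f'| := by
  have h : 0 ≤ s * f' := (hf.const_mul (s : ℝ)).nonneg_of_eq_zero_of_nonneg_right
    (by rw [hx, mul_zero]) hxb fun y hy ↦ by rw [← hs y hy, sign_mul_self]; exact abs_nonneg _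
  rw [← abs_of_nonneg h, abs_mul, abs_coe_signType hs0, one_mul]

lemma HasDerivAt.sign_mul_eq_neg_abs_of_sign_eq_left (hf : HasDerivAt f f' x) (hx : f x = 0)
    (hax : a < x) (hs : ∀ y ∈ Ioo a x, SignType.sign (f y) = s) (hs0 : s ≠ 0) :
    s * f' = -|f'| := by
  have h : s * f' ≤ 0 := (hf.const_mul (s : ℝ)).nonpos_of_eq_zero_of_nonneg_left
    (by rw [hx, mul_zero]) hax fun y hy ↦ by rw [← hs y hy, sign_mul_self]; exact abs_nonneg _
  rw [← neg_eq_iff_eq_neg, ← abs_of_nonpos h, abs_mul, abs_coe_signType hs0, one_mul]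

end OneSided

lemma intervalIntegrable_sign_comp_mul {q g : ℝ → ℝ} (hq : Measurable q) (hg : Continuous g)
    (a b : ℝ) : IntervalIntegrable (fun x ↦ (SignType.sign (q x) : ℝ) * g x) volume a b := by
  refine IntervalIntegrable.mul_continuousOn ?_ hg.continuousOn
  refine intervalIntegrable_const (c := (1 : ℝ)).mono_fun'
    (measurable_coe_sign.comp hq).aestronglyMeasurable (Eventually.of_forall fun x ↦ ?_)
  simpa only [Real.norm_eq_abs] using abs_coe_signType_le _

lemma integral_sign_mul_eq_of_sign_eq {q g g' : ℝ → ℝ} {a b : ℝ} {s : SignType} (hab : a ≤ b)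
    (hs : ∀ x ∈ Ioo a b, SignType.sign (q x) = s) (hg : ∀ x ∈ Icc a b, HasDerivAt g (g' x) x)
    (hg' : IntervalIntegrable g' volume a b) :
    ∫ x in a..b, (SignType.sign (q x) : ℝ) * g' x = s * (g b - g a) := by
  have hae : ∀ᵐ x, x ∈ uIoc a b → (SignType.sign (q x) : ℝ) * g' x = s * g' x := by
    filter_upwards [Measure.ae_ne volume b] with x hxb hx
    rw [uIoc_of_le hab] at hx
    rw [hs x ⟨hx.1, lt_of_le_of_ne hx.2 hxb⟩]
  rw [intervalIntegral.integral_congr_ae hae, intervalIntegral.integral_const_mul,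
    intervalIntegral.integral_eq_sub_of_hasDerivAt (by rwa [uIcc_of_le hab]) hg']

section Partition

variable {q : ℝ → ℝ} {z : ℕ → ℝ}

lemma integral_sign_mul_deriv_deriv_of_signs (hq : ContDiff ℝ 2 q) {s : ℕ → SignType} (n : ℕ)
    (hz : StrictMonoOn z (Iic (n + 1)))
    (hs : ∀ k ≤ n, ∀ x ∈ Ioo (z k) (z (k + 1)), SignType.sign (q x) = s k)
    (hs0 : ∀ k ≤ n, s k ≠ 0) (hzero : ∀ k < n, q (z (k + 1)) = 0) :
    ∫ x in z 0..z (n + 1), (SignType.sign (q x) : ℝ) * deriv (deriv q) x =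
      s n * deriv q (z (n + 1)) - s 0 * deriv q (z 0) -
        2 * ∑ k ∈ Finset.range n, |deriv q (z (k + 1))| := by
  have hq1 : ContDiff ℝ 1 (deriv q) := hq.deriv'
  have hq' : ∀ x, HasDerivAt q (deriv q x) x :=
    fun x ↦ ((hq.differentiable (by norm_num)) x).hasDerivAt
  have hq'' : ∀ x, HasDerivAt (deriv q) (deriv (deriv q) x) x :=
    fun x ↦ ((hq1.differentiable one_ne_zero) x).hasDerivAt
  have hq''c : Continuous (deriv (deriv q)) := hq1.continuous_deriv le_rfl
  have hblock : ∀ k, z k < z (k + 1) → (∀ x ∈ Ioo (z k) (z (k + 1)), SignType.sign (q x) = s k) →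
      ∫ x in z k..z (k + 1), (SignType.sign (q x) : ℝ) * deriv (deriv q) x =
        s k * (deriv q (z (k + 1)) - deriv q (z k)) := fun k hlt hs ↦
    integral_sign_mul_eq_of_sign_eq hlt.le hs (fun x _ ↦ hq'' x) (hq''c.intervalIntegrable _ _)
  induction n with
  | zero =>
    rw [hblock 0 (hz.lt_iff_lt (by simp) (by simp) |>.mpr zero_lt_one) (hs 0 le_rfl)]
    simp only [Finset.range_zero, Finset.sum_empty]
    ring
  | succ n ih =>
    have hlt : ∀ k ≤ n + 1, z k < z (k + 1) := fun k hk ↦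
      (hz.lt_iff_lt (show k ≤ n + 2 by omega) (show k + 1 ≤ n + 2 by omega)).mpr k.lt_succ_self
    have hright := (hq' (z (n + 1))).sign_mul_eq_abs_of_sign_eq_right (hzero n (by omega))
      (hlt (n + 1) le_rfl) (hs (n + 1) le_rfl) (hs0 (n + 1) le_rfl)
    have hleft := (hq' (z (n + 1))).sign_mul_eq_neg_abs_of_sign_eq_left (hzero n (by omega))
      (hlt n (by omega)) (hs n (by omega)) (hs0 n (by omega))
    have hint := intervalIntegrable_sign_comp_mul hq.continuous.measurable hq''c
    rw [← intervalIntegral.integral_add_adjacent_intervals (hint _ _) (hint _ _),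
      ih (hz.mono (Iic_subset_Iic.mpr (by omega))) (fun k hk ↦ hs k (by omega))
        (fun k hk ↦ hs0 k (by omega)) (fun k hk ↦ hzero k (by omega)),
      hblock (n + 1) (hlt (n + 1) le_rfl) (hs (n + 1) le_rfl), Finset.sum_range_succ]
    linear_combination hleft - hright

theorem integral_sign_mul_deriv_deriv_eq {n : ℕ} (hq : ContDiff ℝ 2 q)
    (hz : StrictMonoOn z (Iic (n + 1)))
    (hzeros : ∀ x ∈ Icc (z 0) (z (n + 1)), q x = 0 ↔ ∃ k < n, z (k + 1) = x) :
    ∫ x in z 0..z (n + 1), (SignType.sign (q x) : ℝ) * deriv (deriv q) x =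
      SignType.sign (q (z (n + 1))) * deriv q (z (n + 1)) -
        SignType.sign (q (z 0)) * deriv q (z 0) -
        2 * ∑ k ∈ Finset.range n, |deriv q (z (k + 1))| := by
  have hmono := hz.monotoneOn
  have hlt : ∀ k ≤ n, z k < z (k + 1) := fun k hk ↦
    (hz.lt_iff_lt (show k ≤ n + 1 by omega) (show k + 1 ≤ n + 1 by omega)).mpr k.lt_succ_self
  have hmem : ∀ k ≤ n + 1, z k ∈ Icc (z 0) (z (n + 1)) := fun k hk ↦
    ⟨hmono (show 0 ≤ n + 1 by omega) hk k.zero_le, hmono hk (show n + 1 ≤ n + 1 from le_rfl) hk⟩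
  have hne_block : ∀ k ≤ n, ∀ x ∈ Ioo (z k) (z (k + 1)), q x ≠ 0 := fun k hk x hx hqx ↦ by
    obtain ⟨j, hj, rfl⟩ := (hzeros x ⟨(hmem k (by omega)).1.trans hx.1.le,
      hx.2.le.trans (hmem (k + 1) (by omega)).2⟩).mp hqx
    exact hmono.apply_notMem_Ioo_apply_succ (show j + 1 ≤ n + 1 by omega) (by omega) hx
  have hne_node : ∀ k ≤ n + 1, (∀ j < n, j + 1 ≠ k) → q (z k) ≠ 0 := fun k hk hk' hqk ↦ by
    obtain ⟨j, hj, hjk⟩ := (hzeros _ (hmem k hk)).mp hqk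
    exact hk' j hj (hz.injOn (show j + 1 ≤ n + 1 by omega) hk hjk)
  set c : ℕ → ℝ := fun k ↦ (z k + z (k + 1)) / 2
  have hc : ∀ k ≤ n, c k ∈ Ioo (z k) (z (k + 1)) := fun k hk ↦
    ⟨left_lt_add_div_two.mpr (hlt k hk), add_div_two_lt_right.mpr (hlt k hk)⟩
  have hsign_first : SignType.sign (q (z 0)) = SignType.sign (q (c 0)) := by
    refine isPreconnected_Ico.sign_eq_sign hq.continuous.continuousOn (fun x hx ↦ ?_)
      ⟨le_rfl, hlt 0 n.zero_le⟩ (Ioo_subset_Ico_self (hc 0 n.zero_le))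
    rcases hx.1.eq_or_lt with rfl | h
    · exact hne_node 0 (by omega) fun j _ ↦ by omega
    · exact hne_block 0 n.zero_le x ⟨h, hx.2⟩
  have hsign_last : SignType.sign (q (z (n + 1))) = SignType.sign (q (c n)) := by
    refine isPreconnected_Ioc.sign_eq_sign hq.continuous.continuousOn (fun x hx ↦ ?_)
      ⟨hlt n le_rfl, le_rfl⟩ (Ioo_subset_Ioc_self (hc n le_rfl))
    rcases hx.2.eq_or_lt with rfl | h
    · exact hne_node (n + 1) le_rfl fun j hj ↦ by omega
    · exact hne_block n le_rfl x ⟨hx.1, h⟩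
  rw [hsign_first, hsign_last]
  exact integral_sign_mul_deriv_deriv_of_signs hq n hz
    (fun k hk x hx ↦ isPreconnected_Ioo.sign_eq_sign hq.continuous.continuousOn
      (hne_block k hk) hx (hc k hk))
    (fun k hk ↦ sign_ne_zero.mpr (hne_block k hk _ (hc k hk)))
    (fun k hk ↦ (hzeros _ (hmem (k + 1) (by omega))).mpr ⟨k, hk, rfl⟩)

end Partition

section InsertEndpoints

variable {α : Type*} {N : ℕ} {a b : α} {Y : Fin N → α}

def insertEndpoints (a b : α) (Y : Fin N → α) : ℕ → α
  | 0 => a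
  | k + 1 => if h : k < N then Y ⟨k, h⟩ else b

lemma insertEndpoints_succ_of_lt {k : ℕ} (hk : k < N) :
    insertEndpoints a b Y (k + 1) = Y ⟨k, hk⟩ := by
  simp [insertEndpoints, hk]

@[simp]
lemma insertEndpoints_zero : insertEndpoints a b Y 0 = a := rfl

@[simp]
lemma insertEndpoints_last : insertEndpoints a b Y (N + 1) = b := by
  simp [insertEndpoints]

lemma exists_insertEndpoints_succ_eq_iff {x : α} :
    (∃ k < N, insertEndpoints a b Y (k + 1) = x) ↔ ∃ i, Y i = x := by
  constructor
  · rintro ⟨k, hk, rfl⟩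
    exact ⟨⟨k, hk⟩, (insertEndpoints_succ_of_lt hk).symm⟩
  · rintro ⟨i, rfl⟩
    exact ⟨i, i.2, insertEndpoints_succ_of_lt i.2⟩

lemma sum_range_insertEndpoints_succ {M : Type*} [AddCommMonoid M] (f : α → M) :
    ∑ k ∈ Finset.range N, f (insertEndpoints a b Y (k + 1)) = ∑ i, f (Y i) := by
  rw [← Fin.sum_univ_eq_sum_range (fun k ↦ f (insertEndpoints a b Y (k + 1)))]
  exact Finset.sum_congr rfl fun i _ ↦ by rw [insertEndpoints_succ_of_lt i.2]

lemma strictMonoOn_insertEndpoints [Preorder α] (hab : a < b) (hY : ∀ i, Y i ∈ Ioo a b)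
    (hmono : StrictMono Y) : StrictMonoOn (insertEndpoints a b Y) (Iic (N + 1)) := by
  refine strictMonoOn_Iic_of_lt_succ fun k hk ↦ ?_
  rw [Order.succ_eq_add_one]
  rcases k with _ | k
  · by_cases hN : 0 < N
    · simpa [insertEndpoints, hN] using (hY ⟨0, hN⟩).1
    · simpa [insertEndpoints, hN] using hab
  · rw [insertEndpoints_succ_of_lt (show k < N by omega)]
    by_cases hk' : k + 1 < N
    · rw [insertEndpoints_succ_of_lt hk']
      exact hmono (Fin.mk_lt_mk.mpr k.lt_succ_self)
    · rw [show k + 1 = N by omega, insertEndpoints_last]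
      exact (hY _).2

end InsertEndpoints

theorem stmt_11_general (q : ℝ → ℝ) (hper : ∀ y : ℝ, q (y + 1) = q y)
    (hq : ContDiff ℝ 2 q)
    (N : ℕ) (Y : Fin N → ℝ) (hmonoY : StrictMono Y)
    (hY : ∀ i, Y i ∈ Set.Ioo (-(1 : ℝ) / 2) (1 / 2))
    (hzeros : ∀ y ∈ Set.Icc (-(1 : ℝ) / 2) (1 / 2), (q y = 0 ↔ ∃ i, Y i = y)) :
    ∫ y in Set.Icc (-(1 : ℝ) / 2) (1 / 2), (q y / |q y|) * deriv (deriv q) y =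
      -2 * ∑ i, |deriv q (Y i)| := by
  have key := integral_sign_mul_deriv_deriv_eq hq
    (strictMonoOn_insertEndpoints (by norm_num) hY hmonoY) fun x hx ↦ by
      rw [exists_insertEndpoints_succ_eq_iff]
      exact hzeros x (by simpa using hx)
  have hhalf : -(1 : ℝ) / 2 + 1 = 1 / 2 := by norm_num
  have hq_end : q (1 / 2) = q (-(1 : ℝ) / 2) := hhalf ▸ hper _
  have hq'_end : deriv q (1 / 2) = deriv q (-(1 : ℝ) / 2) := hhalf ▸ Function.Periodic.deriv hper _
  simp only [insertEndpoints_zero, insertEndpoints_last, hq_end, hq'_end, sub_self,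
    zero_sub] at key
  rw [sum_range_insertEndpoints_succ (fun y ↦ |deriv q y|)] at key
  rw [integral_Icc_eq_integral_Ioc, ← intervalIntegral.integral_of_le (by norm_num)]
  simp only [div_abs_eq_sign, key, neg_mul]

/-- Integrating the sign of a C² periodic function against its second derivative
over the circle: if `q` has finitely many zeros, all simple sign changes in the
interior, then `∫ (q/|q|) q'' = -2 Σ |q'(yᵢ)|`. -/
theorem stmt_11 (q : ℝ → ℝ) (hper : ∀ y : ℝ, q (y + 1) = q y)
    (hq : ContDiff ℝ 2 q)
    (N : ℕ) (Y : Fin N → ℝ) (hmonoY : StrictMono Y)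
    (hY : ∀ i, Y i ∈ Set.Ioo (-(1 : ℝ) / 2) (1 / 2))
    (hzeros : ∀ y ∈ Set.Icc (-(1 : ℝ) / 2) (1 / 2), (q y = 0 ↔ ∃ i, Y i = y))
    (hsign : ∀ i, ∃ δ > 0, ∀ a b : ℝ,
      Y i - δ < a → a < Y i → Y i < b → b < Y i + δ → q a * q b < 0) :
    ∫ y in Set.Icc (-(1 : ℝ) / 2) (1 / 2), (q y / |q y|) * deriv (deriv q) y =
      -2 * ∑ i, |deriv q (Y i)| :=
  stmt_11_general q hper hq N Y hmonoY hY hzeros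
end

section
/- Suppose f : [0,∞) → L²(𝕋²) satisfies ‖f(s+t)‖₂ ≤ C e^{−δ d t} ‖f(s)‖₂ for all s,t ≥ 0 (enhanced dissipation with rate δd > 0, constant C ≥ 1), and additionally the L¹–L² smoothing bound ‖f(s+t)‖₂ ≤ C (ν t)^{−1/2} ‖f(s)‖₁ for all s ≥ 0, t > 0 (from the Nash inequality), and ‖f(s+t)‖₁ ≤ ‖f(s)‖₁ for all s,t ≥ 0. If ν ∈ (0,1) is small enough that C² ν³ (ν δ^{-1} d^{-1} |log ν|)^{-1/2} ≤ 1/2 and ‖g‖₁ ≤ ‖g‖₂ on the unit torus, then ‖f(s + 4δ^{-1} d^{-1} |log ν|)‖₁ ≤ (1/2)‖f(s)‖₁ for all s ≥ 0, and hence ‖f(s+t)‖₁ ≤ 2 ‖f(s)‖₁ e^{−c δ d |log ν|^{-1} t} for all s,t ≥ 0 with c = (log 2)/4. -/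
/-- Quantitative content of Lemma 2.1 (L¹ decay under enhanced dissipation),
abstracted: `N1 t = ‖f(t)‖₁`, `N2 t = ‖f(t)‖₂`.  Combining the Nash L¹→L²
smoothing, the L² enhanced dissipation, the embedding `‖·‖₁ ≤ ‖·‖₂` on the unit
torus, and monotonicity of the L¹ norm, gives halving over windows of length
`4 δ⁻¹ d⁻¹ |log ν|` and hence exponential L¹ decay. -/
theorem stmt_14 (N1 N2 : ℝ → ℝ) (C δ d ν : ℝ)
    (hC : 1 ≤ C) (hδ : 0 < δ) (hd : 0 < d) (hν : ν ∈ Set.Ioo (0 : ℝ) 1)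
    (hnn : ∀ t : ℝ, 0 ≤ N1 t)
    (hED : ∀ s t : ℝ, 0 ≤ s → 0 ≤ t →
      N2 (s + t) ≤ C * Real.exp (-(δ * d) * t) * N2 s)
    (hNash : ∀ s t : ℝ, 0 ≤ s → 0 < t →
      N2 (s + t) ≤ C / Real.sqrt (ν * t) * N1 s)
    (hmono : ∀ s t : ℝ, 0 ≤ s → 0 ≤ t → N1 (s + t) ≤ N1 s)
    (hemb : ∀ t : ℝ, 0 ≤ t → N1 t ≤ N2 t)
    (hsmall : C ^ 2 * ν ^ 3 / Real.sqrt (ν * δ⁻¹ * d⁻¹ * |Real.log ν|) ≤ 1 / 2) :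
    (∀ s : ℝ, 0 ≤ s →
      N1 (s + 4 * δ⁻¹ * d⁻¹ * |Real.log ν|) ≤ (1 / 2) * N1 s) ∧
      ∀ s t : ℝ, 0 ≤ s → 0 ≤ t →
        N1 (s + t) ≤ 2 * N1 s *
          Real.exp (-((Real.log 2 / 4) * δ * d * |Real.log ν|⁻¹) * t) := by
  obtain ⟨hν0, hν1⟩ := hν
  have hlog : Real.log ν < 0 := Real.log_neg hν0 hν1
  have hL : 0 < |Real.log ν| := abs_pos.mpr (ne_of_lt hlog)
  set T : ℝ := 4 * δ⁻¹ * d⁻¹ * |Real.log ν| with hTdef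
  have hT : 0 < T := by positivity
  have hCpos : 0 < C := lt_of_lt_of_le one_pos hC
  -- halving step
  have half : ∀ s : ℝ, 0 ≤ s → N1 (s + T) ≤ (1/2) * N1 s := by
    intro s hs
    have hT4 : 0 < T / 4 := by positivity
    have h1 : N1 (s + T) ≤ N2 (s + T) := hemb _ (by linarith)
    have h2 : N2 (s + T) ≤ C * Real.exp (-(δ*d) * (3*(T/4))) * N2 (s + T/4) := by
      have h := hED (s + T/4) (3*(T/4)) (by linarith) (by linarith)
      have heq : s + T/4 + 3*(T/4) = s + T := by ring
      rwa [heq] at h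
    have h3 : N2 (s + T/4) ≤ C / Real.sqrt (ν * (T/4)) * N1 s :=
      hNash s (T/4) hs hT4
    have hEpos : 0 ≤ C * Real.exp (-(δ*d) * (3*(T/4))) := by positivity
    have h4 : N1 (s + T) ≤ C * Real.exp (-(δ*d) * (3*(T/4))) *
        (C / Real.sqrt (ν * (T/4)) * N1 s) :=
      le_trans h1 (le_trans h2 (mul_le_mul_of_nonneg_left h3 hEpos))
    have hTq : δ * d * (T/4) = |Real.log ν| := by
      rw [hTdef]; field_simp
    have hexp : Real.exp (-(δ*d) * (3*(T/4))) = ν ^ 3 := by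
      have heq : -(δ*d) * (3*(T/4)) = -3 * (δ * d * (T/4)) := by ring
      rw [heq, hTq, abs_of_neg hlog]
      have : (-3 : ℝ) * -Real.log ν = 3 * Real.log ν := by ring
      rw [this, show (3:ℝ) * Real.log ν = Real.log (ν^3) by
        rw [Real.log_pow]; push_cast; ring]
      exact Real.exp_log (by positivity)
    have hsq : ν * (T/4) = ν * δ⁻¹ * d⁻¹ * |Real.log ν| := by
      rw [hTdef]; ring
    have hkey : C * Real.exp (-(δ*d) * (3*(T/4))) * (C / Real.sqrt (ν * (T/4))) =
        C ^ 2 * ν ^ 3 / Real.sqrt (ν * δ⁻¹ * d⁻¹ * |Real.log ν|) := by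
      rw [hexp, hsq]; ring
    calc N1 (s+T) ≤ C * Real.exp (-(δ*d) * (3*(T/4))) *
            (C / Real.sqrt (ν * (T/4))) * N1 s := by rw [mul_assoc]; exact h4
      _ = C ^ 2 * ν ^ 3 / Real.sqrt (ν * δ⁻¹ * d⁻¹ * |Real.log ν|) * N1 s := by
            rw [hkey]
      _ ≤ (1/2) * N1 s := mul_le_mul_of_nonneg_right hsmall (hnn s)
  refine ⟨half, ?_⟩
  -- iteration
  have iter : ∀ n : ℕ, ∀ s : ℝ, 0 ≤ s → N1 (s + n * T) ≤ (1/2)^n * N1 s := by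
    intro n
    induction n with
    | zero => intro s hs; simp
    | succ n ih =>
      intro s hs
      have hsn : 0 ≤ s + n * T := by positivity
      have h1 : N1 (s + (n+1 : ℕ) * T) ≤ (1/2) * N1 (s + n*T) := by
        have h := half (s + n*T) hsn
        have heq : s + n*T + T = s + (n+1 : ℕ) * T := by push_cast; ring
        rwa [heq] at h
      calc N1 (s + (n+1 : ℕ) * T) ≤ (1/2) * N1 (s + n*T) := h1
        _ ≤ (1/2) * ((1/2)^n * N1 s) := by linarith [ih s hs]
        _ = (1/2)^(n+1 : ℕ) * N1 s := by ring
  intro s t hs ht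
  set n := ⌊t / T⌋₊ with hn
  have hnT : (n:ℝ) * T ≤ t := by
    calc (n:ℝ) * T ≤ (t/T) * T :=
          mul_le_mul_of_nonneg_right (Nat.floor_le (by positivity)) hT.le
      _ = t := by field_simp
  have h1 : N1 (s + t) ≤ N1 (s + n*T) := by
    have h := hmono (s + n*T) (t - n*T) (by positivity) (by linarith)
    have heq : s + n*T + (t - n*T) = s + t := by ring
    rwa [heq] at h
  have h2 : N1 (s + n*T) ≤ (1/2)^n * N1 s := iter n s hs
  have hc : (Real.log 2 / 4) * δ * d * |Real.log ν|⁻¹ = Real.log 2 / T := by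
    rw [hTdef]; field_simp
  have h3 : ((1:ℝ)/2)^n ≤
      2 * Real.exp (-((Real.log 2 / 4) * δ * d * |Real.log ν|⁻¹) * t) := by
    rw [hc]
    have hfl : t / T < n + 1 := Nat.lt_floor_add_one _
    have hL2 : (0:ℝ) < Real.log 2 := Real.log_pos one_lt_two
    have hform : ((1:ℝ)/2)^n = Real.exp ((n:ℝ) * (-Real.log 2)) := by
      rw [Real.exp_nat_mul, Real.exp_neg, Real.exp_log two_pos]
      norm_num
    rw [hform, show (2:ℝ) * Real.exp (-(Real.log 2 / T) * t) =
      Real.exp (Real.log 2 + -(Real.log 2 / T) * t) by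
        rw [Real.exp_add, Real.exp_log two_pos]]
    apply Real.exp_le_exp.mpr
    have hlt : (Real.log 2 / T) * t ≤ ((n:ℝ)+1) * Real.log 2 := by
      have h5 : t / T ≤ (n:ℝ) + 1 := hfl.le
      calc (Real.log 2 / T) * t = (t/T) * Real.log 2 := by ring
        _ ≤ ((n:ℝ)+1) * Real.log 2 := mul_le_mul_of_nonneg_right h5 hL2.le
    nlinarith [hlt]
  calc N1 (s + t) ≤ (1/2)^n * N1 s := le_trans h1 h2
    _ ≤ 2 * Real.exp (-((Real.log 2 / 4) * δ * d * |Real.log ν|⁻¹) * t) * N1 s :=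
        mul_le_mul_of_nonneg_right h3 (hnn s)
    _ = 2 * N1 s * Real.exp (-((Real.log 2 / 4) * δ * d * |Real.log ν|⁻¹) * t) := by
        ring
end
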